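/- arXiv:2509.18702 — 2 statements merged into one kernel-verified Lean document; each statement's English description precedes it below -/
import Mathlib

section
/- Suppose (G, E, φ) is pseudo free. Then for all g₁, g₂ ∈ G and every α ∈ E*: if g₁·α = g₂·α and φ(g₁, α) = φ(g₂, α), then g₁ = g₂. -/
/-- Finite paths in a directed graph: `Pth.nil x` is the length-zero path at the
vertex `x`, and `Pth.cons e p` is the path whose first edge is `e`, followed by `p`. -/
inductive Pth (V : Type) (Ed : Type) : Type where
  | nil : V → Pth V Ed
  | cons : Ed → Pth V Ed → Pth V Ed

/-- A self-similar graph `(G, E, φ)`: a group `G` acting on a directed graph `E`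
(with vertex set `V`, edge set `Ed`, range `r` and source `d`) by graph
automorphisms, together with a one-cocycle `φ : G × E¹ → G` for the action on
edges, satisfying `φ(g,e)·x = g·x` for all vertices `x`. -/
structure SelfSimGraph (G V Ed : Type) [Group G] : Type where
  r : Ed → V
  d : Ed → V
  actV : G → V → V
  actE : G → Ed → Ed
  actV_one : ∀ x, actV 1 x = x
  actV_mul : ∀ g h x, actV (g * h) x = actV g (actV h x)
  actE_one : ∀ e, actE 1 e = e
  actE_mul : ∀ g h e, actE (g * h) e = actE g (actE h e)
  r_act : ∀ g e, r (actE g e) = actV g (r e)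
  d_act : ∀ g e, d (actE g e) = actV g (d e)
  phi : G → Ed → G
  phi_cocycle : ∀ g h e, phi (g * h) e = phi g (actE h e) * phi h e
  phi_vertex : ∀ g e x, actV (phi g e) x = actV g x

variable {G V Ed : Type} [Group G]

/-- The range `r(α)` of a finite path. -/
def rngP (S : SelfSimGraph G V Ed) : Pth V Ed → V
  | Pth.nil x => x
  | Pth.cons e _ => S.r e

/-- The source `d(α)` of a finite path. -/
def srcP (S : SelfSimGraph G V Ed) : Pth V Ed → V
  | Pth.nil x => x
  | Pth.cons _ p => srcP S p

/-- Well-formedness of a finite path: consecutive edges match, `d(αᵢ) = r(αᵢ₊₁)`. -/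
def WFP (S : SelfSimGraph G V Ed) : Pth V Ed → Prop
  | Pth.nil _ => True
  | Pth.cons e p => S.d e = rngP S p ∧ WFP S p

/-- The length of a finite path. -/
def lenP : Pth V Ed → ℕ
  | Pth.nil _ => 0
  | Pth.cons _ p => lenP p + 1

/-- Concatenation `αβ` of finite paths (meaningful when `d(α) = r(β)`). -/
def compP : Pth V Ed → Pth V Ed → Pth V Ed
  | Pth.nil _, q => q
  | Pth.cons e p, q => Pth.cons e (compP p q)

/-- The action of `G` extended to finite paths:
`g·x = g·x` on vertices and `g·(eα) = (g·e)(φ(g,e)·α)`. -/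
def actP (S : SelfSimGraph G V Ed) : G → Pth V Ed → Pth V Ed
  | g, Pth.nil x => Pth.nil (S.actV g x)
  | g, Pth.cons e p => Pth.cons (S.actE g e) (actP S (S.phi g e) p)

/-- The cocycle extended to finite paths:
`φ(g,x) = g` on vertices and `φ(g, eα) = φ(φ(g,e), α)`. -/
def phiP (S : SelfSimGraph G V Ed) : G → Pth V Ed → G
  | g, Pth.nil _ => g
  | g, Pth.cons e p => phiP S (S.phi g e) p

/-- A path `τ` is strongly fixed by `g` if `g·τ = τ` and `φ(g,τ) = 1`. -/
def StronglyFixed (S : SelfSimGraph G V Ed) (g : G) (τ : Pth V Ed) : Prop :=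
  WFP S τ ∧ actP S g τ = τ ∧ phiP S g τ = 1

/-- `(G,E,φ)` is pseudo free if `g·e = e` and `φ(g,e) = 1` imply `g = 1`. -/
def PseudoFree (S : SelfSimGraph G V Ed) : Prop :=
  ∀ (g : G) (e : Ed), S.actE g e = e → S.phi g e = 1 → g = 1

/-- `p` is a prefix (initial segment) of `q`: `q = pε` for some path `ε`. -/
def IsPrefixP (S : SelfSimGraph G V Ed) (p q : Pth V Ed) : Prop :=
  ∃ ε, WFP S ε ∧ rngP S ε = srcP S p ∧ compP p ε = q

/-- The set `M_g` of minimal strongly fixed paths for `g`: strongly fixed paths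
none of whose proper prefixes is strongly fixed. -/
def MinSF (S : SelfSimGraph G V Ed) (g : G) : Set (Pth V Ed) :=
  {μ | StronglyFixed S g μ ∧ ∀ p, IsPrefixP S p μ → p ≠ μ → ¬StronglyFixed S g p}

/-- Well-formedness of an infinite path, viewed as a sequence of edges:
`d(ξᵢ) = r(ξᵢ₊₁)`. -/
def InfWF (S : SelfSimGraph G V Ed) (ξ : ℕ → Ed) : Prop :=
  ∀ i, S.d (ξ i) = S.r (ξ (i + 1))

/-- The range `r(ξ)` of an infinite path. -/
def rngInf (S : SelfSimGraph G V Ed) (ξ : ℕ → Ed) : V := S.r (ξ 0)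

/-- `takeP S ξ n` is the finite path `ξ|ₙ = ξ₁⋯ξₙ` (with `ξ|₀ = r(ξ₁)`). -/
def takeP (S : SelfSimGraph G V Ed) : (ℕ → Ed) → ℕ → Pth V Ed
  | ξ, 0 => Pth.nil (S.r (ξ 0))
  | ξ, n + 1 => Pth.cons (ξ 0) (takeP S (fun i => ξ (i + 1)) n)

/-- Membership of an infinite path in the cylinder `Z(α)`:
the initial segment of `ξ` of length `|α|` equals `α`. -/
def InZ (S : SelfSimGraph G V Ed) (α : Pth V Ed) (ξ : ℕ → Ed) : Prop :=
  takeP S ξ (lenP α) = α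

/-- The infinite path `αξ` obtained by prepending a finite path to an infinite one. -/
def prepSeq : Pth V Ed → (ℕ → Ed) → ℕ → Ed
  | Pth.nil _, ξ, n => ξ n
  | Pth.cons e _, _, 0 => e
  | Pth.cons _ p, ξ, n + 1 => prepSeq p ξ n

/-- Dropping the first `k` edges of an infinite path. -/
def dropSeq (k : ℕ) (ξ : ℕ → Ed) : ℕ → Ed := fun n => ξ (n + k)

/-- The space `E^∞` of infinite paths. -/
def InfPath (S : SelfSimGraph G V Ed) : Type := {ξ : ℕ → Ed // InfWF S ξ}

/-- The topology of `E^∞`: the subspace topology induced from the product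
topology on `(E¹)^ℕ`, `E¹` being discrete.  Its basis consists of the
cylinders `Z(α)`. -/
def infTop (S : SelfSimGraph G V Ed) : TopologicalSpace (InfPath S) :=
  TopologicalSpace.induced (fun ξ => ξ.1)
    (@Pi.topologicalSpace ℕ (fun _ => Ed) (fun _ => ⊥))

/-- Specification of the (unique) action of `G` on `E^∞`: `(g·ξ)|ₙ = g·(ξ|ₙ)`. -/
def ActSpec (S : SelfSimGraph G V Ed) (act : G → (ℕ → Ed) → ℕ → Ed) : Prop :=
  ∀ (g : G) (ξ : ℕ → Ed) (n : ℕ), takeP S (act g ξ) n = actP S g (takeP S ξ n)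

/-- The action of a triple `s = (α, g, β) ∈ S_{G,E}` on `E^∞`: it sends
`βξ ∈ Z(β)` to `α(g·ξ)`. -/
def sActSeq (S : SelfSimGraph G V Ed) (act : G → (ℕ → Ed) → ℕ → Ed)
    (α : Pth V Ed) (g : G) (β : Pth V Ed) (ξ : ℕ → Ed) : ℕ → Ed :=
  prepSeq α (act g (dropSeq (lenP β) ξ))

/-- The set of fixed points in `E^∞` of the element `s = (α, g, β)` of `S_{G,E}`. -/
def FixSet (S : SelfSimGraph G V Ed) (act : G → (ℕ → Ed) → ℕ → Ed)
    (α : Pth V Ed) (g : G) (β : Pth V Ed) : Set (InfPath S) :=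
  {η | InZ S β η.1 ∧ sActSeq S act α g β η.1 = η.1}

/-- A vertex `x` is simple if `r⁻¹(x)` is a singleton. -/
def SimpleVtx (S : SelfSimGraph G V Ed) (x : V) : Prop := ∃! e : Ed, S.r e = x

/-- A path `γ = γ₁⋯γₙ` has no entry if `d(γᵢ)` is simple for every `i`. -/
def NoEntry (S : SelfSimGraph G V Ed) : Pth V Ed → Prop
  | Pth.nil _ => True
  | Pth.cons e p => SimpleVtx S (S.d e) ∧ NoEntry S p

/-- A circuit: a path `γ` of nonzero length with `d(γ) = r(γ)`. -/
def Circuit (S : SelfSimGraph G V Ed) (γ : Pth V Ed) : Prop :=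
  WFP S γ ∧ 1 ≤ lenP γ ∧ srcP S γ = rngP S γ

/-- A `G`-circuit: a pair `(g,γ)` with `γ` of nonzero length and `d(γ) = g·r(γ)`. -/
def GCircuit (S : SelfSimGraph G V Ed) (g : G) (γ : Pth V Ed) : Prop :=
  WFP S γ ∧ 1 ≤ lenP γ ∧ srcP S γ = S.actV g (rngP S γ)

/-- `g` is slack at `x` if all sufficiently long paths with range `x` are
strongly fixed by `g`. -/
def SlackAt (S : SelfSimGraph G V Ed) (g : G) (x : V) : Prop :=
  ∃ n : ℕ, ∀ γ, WFP S γ → rngP S γ = x → n ≤ lenP γ → StronglyFixed S g γ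

/-- The sequence `(γⁿ, gₙ)` attached to a `G`-circuit `(g, γ)`:
`γ¹ = γ`, `g₁ = g`, `γⁿ⁺¹ = gₙ·γⁿ`, `gₙ₊₁ = φ(gₙ, γⁿ)` (indexed from `0`). -/
def circIter (S : SelfSimGraph G V Ed) (g : G) (γ : Pth V Ed) : ℕ → Pth V Ed × G
  | 0 => (γ, g)
  | n + 1 =>
      (actP S (circIter S g γ n).2 (circIter S g γ n).1,
       phiP S (circIter S g γ n).2 (circIter S g γ n).1)

/-- The finite concatenation `γ¹γ²⋯γⁿ`. -/
def circConcat (S : SelfSimGraph G V Ed) (g : G) (γ : Pth V Ed) : ℕ → Pth V Ed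
  | 0 => Pth.nil (rngP S γ)
  | n + 1 => compP (circConcat S g γ n) (circIter S g γ n).1

/-- `ξ` is the infinite concatenation `ξ(g,γ) = γ¹γ²γ³⋯`: it is an infinite path
whose initial segments are the finite concatenations `γ¹⋯γⁿ`. -/
def IsCircPath (S : SelfSimGraph G V Ed) (g : G) (γ : Pth V Ed) (ξ : ℕ → Ed) : Prop :=
  InfWF S ξ ∧ ∀ n, takeP S ξ (lenP (circConcat S g γ n)) = circConcat S g γ n

/-- `x ⇀ y`: there is a finite path with source `x` and range `y`. -/
def RelPath (S : SelfSimGraph G V Ed) (x y : V) : Prop :=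
  ∃ α, WFP S α ∧ srcP S α = x ∧ rngP S α = y

/-- `x ∼ y`: `x` and `y` are in the same `G`-orbit. -/
def RelOrb (S : SelfSimGraph G V Ed) (x y : V) : Prop :=
  ∃ g : G, S.actV g x = y

/-- `x ≫ y`: there is a vertex `u` with `x ⇀ u ∼ y`. -/
def RelGG (S : SelfSimGraph G V Ed) (x y : V) : Prop :=
  ∃ u, RelPath S x u ∧ RelOrb S u y

/-- A nonzero element `(α, g, β)` of `S_{G,E}`: `α, β ∈ E*`, `g ∈ G`, with
`d(α) = g·d(β)`. -/
def SGETriple (S : SelfSimGraph G V Ed) : Type :=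
  {t : Pth V Ed × G × Pth V Ed //
    WFP S t.1 ∧ WFP S t.2.2 ∧ srcP S t.1 = S.actV t.2.1 (srcP S t.2.2)}

/-- The inverse semigroup `S_{G,E}` (as a set): the triples together with `0 = none`. -/
def SGE (S : SelfSimGraph G V Ed) : Type := Option (SGETriple S)

/-- Forget the membership proofs. -/
def sgeToRaw (S : SelfSimGraph G V Ed) : SGE S → Option (Pth V Ed × G × Pth V Ed) :=
  Option.map Subtype.val

/-- The adjoint: `(α, g, β)* = (β, g⁻¹, α)`, `0* = 0`. -/
def starSGE (S : SelfSimGraph G V Ed) : SGE S → SGE S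
  | none => none
  | some s =>
      some ⟨(s.1.2.2, s.1.2.1⁻¹, s.1.1),
        ⟨s.2.2.1, s.2.1, by
          rw [s.2.2.2, ← S.actV_mul, inv_mul_cancel, S.actV_one]⟩⟩

/-- The idempotent `f_α = (α, 1, α)`. -/
def fIdem (S : SelfSimGraph G V Ed) (α : Pth V Ed) (h : WFP S α) : SGE S :=
  some ⟨(α, 1, α), ⟨h, h, by rw [S.actV_one]⟩⟩

/-- Specification of the multiplication of `S_{G,E}`:
`0` is absorbing; `(α,g,β)(γ,h,δ) = (α(g·ε), φ(g,ε)h, δ)` if `γ = βε`;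
`(α,g,β)(γ,h,δ) = (α, gφ(h⁻¹,ε)⁻¹, δ(h⁻¹·ε))` if `β = γε`; `0` otherwise. -/
def MulSpec (S : SelfSimGraph G V Ed) (mul : SGE S → SGE S → SGE S) : Prop :=
  (∀ t, mul none t = none) ∧
  (∀ s, mul s none = none) ∧
  (∀ (s t : SGETriple S) (ε : Pth V Ed),
     WFP S ε → rngP S ε = srcP S s.1.2.2 → t.1.1 = compP s.1.2.2 ε →
       sgeToRaw S (mul (some s) (some t)) =
         some (compP s.1.1 (actP S s.1.2.1 ε), phiP S s.1.2.1 ε * t.1.2.1, t.1.2.2)) ∧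
  (∀ (s t : SGETriple S) (ε : Pth V Ed),
     WFP S ε → rngP S ε = srcP S t.1.1 → s.1.2.2 = compP t.1.1 ε →
       sgeToRaw S (mul (some s) (some t)) =
         some (s.1.1, s.1.2.1 * (phiP S t.1.2.1⁻¹ ε)⁻¹,
               compP t.1.2.2 (actP S t.1.2.1⁻¹ ε))) ∧
  (∀ (s t : SGETriple S),
     (¬∃ ε, WFP S ε ∧ rngP S ε = srcP S s.1.2.2 ∧ t.1.1 = compP s.1.2.2 ε) →
     (¬∃ ε, WFP S ε ∧ rngP S ε = srcP S t.1.1 ∧ s.1.2.2 = compP t.1.1 ε) →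
       mul (some s) (some t) = none)

/-- Topological freeness of the standard action of `S_{G,E}` on `E^∞`: for every
nonzero `s = (α, g, β)`, every interior fixed point `ζ` of `s` satisfies `α = β`
and `ζ ∈ Z(ατ)` for some `τ` strongly fixed by `g`. -/
def TopFree (S : SelfSimGraph G V Ed) (act : G → (ℕ → Ed) → ℕ → Ed) : Prop :=
  ∀ (α : Pth V Ed) (g : G) (β : Pth V Ed),
    WFP S α → WFP S β → srcP S α = S.actV g (srcP S β) →
    ∀ ζ : InfPath S, ζ ∈ @interior (InfPath S) (infTop S) (FixSet S act α g β) →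
      α = β ∧ ∃ τ : Pth V Ed, WFP S τ ∧ rngP S τ = srcP S α ∧
        StronglyFixed S g τ ∧ InZ S (compP α τ) ζ.1

/-! For a single edge `e`, the cocycle identity shows that `g₂⁻¹g₁` fixes `e` with trivial
restriction, so pseudo freeness gives `g₁ = g₂`. For a path `eα`, the recursion
`φ(g, eα) = φ(φ(g, e), α)` lets induction on `α` first give `φ(g₁, e) = φ(g₂, e)`. -/

theorem SelfSimGraph.phi_one (S : SelfSimGraph G V Ed) (e : Ed) : S.phi 1 e = 1 := by
  have h := S.phi_cocycle 1 1 e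
  rw [one_mul, S.actE_one] at h
  exact right_eq_mul.mp h

theorem PseudoFree.eq_of_actE_eq_of_phi_eq {S : SelfSimGraph G V Ed} (hpf : PseudoFree S)
    {g₁ g₂ : G} {e : Ed} (hact : S.actE g₁ e = S.actE g₂ e)
    (hphi : S.phi g₁ e = S.phi g₂ e) : g₁ = g₂ := by
  have hfix : g₂⁻¹ * g₁ = 1 := by
    apply hpf (g₂⁻¹ * g₁) e
    · rw [S.actE_mul, hact, ← S.actE_mul, inv_mul_cancel, S.actE_one]
    · rw [S.phi_cocycle, hact, hphi, ← S.phi_cocycle, inv_mul_cancel, S.phi_one]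
  exact (inv_mul_eq_one.mp hfix).symm

theorem PseudoFree.eq_of_actP_eq_of_phiP_eq {S : SelfSimGraph G V Ed} (hpf : PseudoFree S)
    {g₁ g₂ : G} {α : Pth V Ed} (hact : actP S g₁ α = actP S g₂ α)
    (hphi : phiP S g₁ α = phiP S g₂ α) : g₁ = g₂ := by
  induction α generalizing g₁ g₂ with
  | nil x => exact hphi
  | cons e p ih =>
    obtain ⟨hactE, hactP⟩ := Pth.cons.inj hact
    exact hpf.eq_of_actE_eq_of_phi_eq hactE (ih hactP hphi)

theorem statement5_general {G V Ed : Type} [Group G]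
    (S : SelfSimGraph G V Ed)
    (hpf : PseudoFree S) (g₁ g₂ : G) (α : Pth V Ed)
    (h1 : actP S g₁ α = actP S g₂ α) (h2 : phiP S g₁ α = phiP S g₂ α) :
    g₁ = g₂ :=
  hpf.eq_of_actP_eq_of_phiP_eq h1 h2

/-- If `(G,E,φ)` is pseudo free, then `g₁·α = g₂·α` and `φ(g₁,α) = φ(g₂,α)`
imply `g₁ = g₂`. -/
theorem statement5 {G V Ed : Type} [Group G] [Fintype V] [Fintype Ed]
    (S : SelfSimGraph G V Ed) (hNoSources : ∀ x : V, ∃ e : Ed, S.r e = x)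
    (hpf : PseudoFree S) (g₁ g₂ : G) (α : Pth V Ed) (hα : WFP S α)
    (h1 : actP S g₁ α = actP S g₂ α) (h2 : phiP S g₁ α = phiP S g₂ α) :
    g₁ = g₂ :=
  statement5_general S hpf g₁ g₂ α h1 h2
end

section
/- S_{G,E} is E*-unitary — that is, whenever e is a nonzero idempotent of S_{G,E} and s ∈ S_{G,E} satisfies s·e = e, then s is idempotent — if and only if (G, E, φ) is pseudo free. -/
variable {G V Ed : Type} [Group G]

/-!
The idempotents of `S_{G,E}` are the triples `(α, 1, α)`. If a triple `s = (α, g, β)` fixes a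
nonzero element from the left, comparing components in the product formula forces `α = β` and
exhibits a path strongly fixed by `g`; pseudo freeness propagates from edges to paths along the
recursion defining `φ`, so `g = 1` and `s` is idempotent. Conversely, if `g·e = e` and
`φ(g, e) = 1`, then `(r(e), g, r(e))` fixes the idempotent `(e, 1, e)` from the left, and it is
idempotent only when `g = 1`.
-/

section Paths

variable {S : SelfSimGraph G V Ed}

lemma lenP_actP (g : G) (p : Pth V Ed) : lenP (actP S g p) = lenP p := by
  induction p generalizing g with
  | nil x => rfl
  | cons e p ih => simp [actP, lenP, ih]

lemma lenP_compP (p q : Pth V Ed) : lenP (compP p q) = lenP p + lenP q := by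
  induction p with
  | nil x => simp [compP, lenP]
  | cons e p ih => simp [compP, lenP, ih]; omega

lemma rngP_actP (g : G) (p : Pth V Ed) : rngP S (actP S g p) = S.actV g (rngP S p) := by
  cases p with
  | nil x => rfl
  | cons e p => exact S.r_act g e

lemma phiP_of_lenP_eq_zero (g : G) {p : Pth V Ed} (hp : lenP p = 0) : phiP S g p = g := by
  cases p with
  | nil x => rfl
  | cons e p => simp [lenP] at hp

lemma eq_nil_of_lenP_eq_zero {p : Pth V Ed} (hp : lenP p = 0) : p = Pth.nil (rngP S p) := by
  cases p with
  | nil x => rfl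
  | cons e p => simp [lenP] at hp

lemma compP_nil_srcP (p : Pth V Ed) : compP p (Pth.nil (srcP S p)) = p := by
  induction p with
  | nil x => rfl
  | cons e p ih => exact congrArg (Pth.cons e) ih

lemma lenP_eq_zero_of_compP_actP_eq_self {g : G} {p ε : Pth V Ed}
    (h : compP p (actP S g ε) = p) : lenP ε = 0 := by
  have := congrArg lenP h
  rw [lenP_compP, lenP_actP] at this
  omega

lemma eq_of_compP_eq_compP_of_lenP_eq {a b p q : Pth V Ed} (hl : lenP a = lenP b)
    (h : compP a p = compP b q) : p = q := by
  induction a generalizing b with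
  | nil x =>
    cases b with
    | nil y => exact h
    | cons f b => simp [lenP] at hl
  | cons e a ih =>
    cases b with
    | nil y => simp [lenP] at hl
    | cons f b =>
      simp only [compP, Pth.cons.injEq] at h
      exact ih (by simpa [lenP] using hl) h.2

lemma eq_of_compP_eq_compP_of_srcP_eq {a b p q : Pth V Ed} (hl : lenP a = lenP b)
    (hs : srcP S a = srcP S b) (h : compP a p = compP b q) : a = b := by
  induction a generalizing b with
  | nil x =>
    cases b with
    | nil y => exact congrArg Pth.nil hs
    | cons f b => simp [lenP] at hl
  | cons e a ih =>
    cases b with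
    | nil y => simp [lenP] at hl
    | cons f b =>
      simp only [compP, Pth.cons.injEq] at h
      exact congrArg₂ Pth.cons h.1 (ih (by simpa [lenP] using hl) hs h.2)

end Paths

lemma PseudoFree.eq_one_of_stronglyFixed {S : SelfSimGraph G V Ed} (hS : PseudoFree S)
    {g : G} {τ : Pth V Ed} (hτ : StronglyFixed S g τ) : g = 1 := by
  obtain ⟨-, hfix, hphi⟩ := hτ
  induction τ generalizing g with
  | nil x => exact hphi
  | cons e p ih =>
    simp only [actP, Pth.cons.injEq] at hfix
    exact hS g e hfix.1 (ih hfix.2 hphi)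

lemma sgeToRaw_injective (S : SelfSimGraph G V Ed) : Function.Injective (sgeToRaw S) :=
  Option.map_injective Subtype.val_injective

namespace MulSpec

variable {S : SelfSimGraph G V Ed} {mul : SGE S → SGE S → SGE S}

lemma mul_eq_of_left_prefix (hmul : MulSpec S mul) {s t u : SGETriple S} {ε : Pth V Ed}
    (hε : WFP S ε) (hr : rngP S ε = srcP S s.1.2.2) (hc : t.1.1 = compP s.1.2.2 ε)
    (hu : u.1 = (compP s.1.1 (actP S s.1.2.1 ε), phiP S s.1.2.1 ε * t.1.2.1, t.1.2.2)) :
    mul (some s) (some t) = some u :=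
  sgeToRaw_injective S <| (hmul.2.2.1 s t ε hε hr hc).trans (congrArg some hu.symm)

lemma eq_some_cases (hmul : MulSpec S mul) {s t u : SGETriple S}
    (h : mul (some s) (some t) = some u) :
    (∃ ε, WFP S ε ∧ rngP S ε = srcP S s.1.2.2 ∧ t.1.1 = compP s.1.2.2 ε ∧
      u.1 = (compP s.1.1 (actP S s.1.2.1 ε), phiP S s.1.2.1 ε * t.1.2.1, t.1.2.2)) ∨
    (∃ ε, WFP S ε ∧ rngP S ε = srcP S t.1.1 ∧ s.1.2.2 = compP t.1.1 ε ∧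
      u.1 = (s.1.1, s.1.2.1 * (phiP S t.1.2.1⁻¹ ε)⁻¹, compP t.1.2.2 (actP S t.1.2.1⁻¹ ε))) := by
  by_cases hl : ∃ ε, WFP S ε ∧ rngP S ε = srcP S s.1.2.2 ∧ t.1.1 = compP s.1.2.2 ε
  · obtain ⟨ε, hε, hr, hc⟩ := hl
    have := hmul.2.2.1 s t ε hε hr hc
    rw [h] at this
    exact Or.inl ⟨ε, hε, hr, hc, Option.some.inj this⟩
  by_cases hr : ∃ ε, WFP S ε ∧ rngP S ε = srcP S t.1.1 ∧ s.1.2.2 = compP t.1.1 ε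
  · obtain ⟨ε, hε, hr, hc⟩ := hr
    have := hmul.2.2.2.1 s t ε hε hr hc
    rw [h] at this
    exact Or.inr ⟨ε, hε, hr, hc, Option.some.inj this⟩
  · exact absurd (h.symm.trans (hmul.2.2.2.2 s t hl hr)) (Option.some_ne_none u)

lemma mul_self_of_eq_one (hmul : MulSpec S mul) {t : SGETriple S} (h1 : t.1.2.1 = 1)
    (hα : t.1.1 = t.1.2.2) : mul (some t) (some t) = some t := by
  refine hmul.mul_eq_of_left_prefix (ε := Pth.nil (srcP S t.1.2.2)) trivial rfl
    (by rw [compP_nil_srcP, hα]) ?_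
  obtain ⟨⟨α, g, β⟩, _⟩ := t
  dsimp only at h1 hα ⊢
  subst h1 hα
  simp only [actP, phiP, S.actV_one, compP_nil_srcP, one_mul]

lemma eq_one_of_mul_self (hmul : MulSpec S mul) {t : SGETriple S}
    (h : mul (some t) (some t) = some t) : t.1.2.1 = 1 := by
  rcases hmul.eq_some_cases h with ⟨ε, -, -, -, hu⟩ | ⟨ε, -, -, -, hu⟩
  · have hε : lenP ε = 0 := lenP_eq_zero_of_compP_actP_eq_self (congrArg Prod.fst hu).symm
    have hg := congrArg (·.2.1) hu
    simp only [phiP_of_lenP_eq_zero _ hε] at hg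
    exact right_eq_mul.mp hg
  · have hε : lenP ε = 0 := lenP_eq_zero_of_compP_actP_eq_self (congrArg (·.2.2) hu).symm
    have hg := congrArg (·.2.1) hu
    simp only [phiP_of_lenP_eq_zero _ hε, inv_inv] at hg
    exact left_eq_mul.mp hg

lemma exists_stronglyFixed_of_mul_eq_right (hmul : MulSpec S mul) {s t : SGETriple S}
    (h : mul (some s) (some t) = some t) :
    s.1.1 = s.1.2.2 ∧ ∃ τ, StronglyFixed S s.1.2.1 τ := by
  rcases hmul.eq_some_cases h with ⟨ε, hε, hr, hc, hu⟩ | ⟨ε, -, hr, hc, hu⟩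
  · have hcomp : compP s.1.1 (actP S s.1.2.1 ε) = compP s.1.2.2 ε :=
      (congrArg Prod.fst hu).symm.trans hc
    have hl : lenP s.1.1 = lenP s.1.2.2 := by
      have := congrArg lenP hcomp
      rw [lenP_compP, lenP_compP, lenP_actP] at this
      omega
    have hfix := eq_of_compP_eq_compP_of_lenP_eq hl hcomp
    -- the prefixes may be vertices: `d(α) = g·r(ε) = r(g·ε) = r(ε) = d(β)`
    have hs : srcP S s.1.1 = srcP S s.1.2.2 := by
      rw [s.2.2.2, ← hr, ← rngP_actP, hfix]
    have hphi : phiP S s.1.2.1 ε = 1 := right_eq_mul.mp (congrArg (·.2.1) hu)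
    exact ⟨eq_of_compP_eq_compP_of_srcP_eq hl hs hcomp, ε, hε, hfix, hphi⟩
  · have hε : lenP ε = 0 := lenP_eq_zero_of_compP_actP_eq_self (congrArg (·.2.2) hu).symm
    have hg := congrArg (·.2.1) hu
    simp only [phiP_of_lenP_eq_zero _ hε, inv_inv] at hg
    have hg1 : s.1.2.1 = 1 := right_eq_mul.mp hg
    have hβ : s.1.2.2 = t.1.1 := by
      rw [hc, eq_nil_of_lenP_eq_zero (S := S) hε, hr, compP_nil_srcP]
    refine ⟨hβ ▸ (congrArg Prod.fst hu).symm, Pth.nil (srcP S t.1.1), ?_⟩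
    rw [hg1]
    exact ⟨trivial, congrArg Pth.nil (S.actV_one _), rfl⟩

end MulSpec

theorem statement7_general {G V Ed : Type} [Group G]
    (S : SelfSimGraph G V Ed)
    (mul : SGE S → SGE S → SGE S) (hmul : MulSpec S mul) :
    (∀ e s : SGE S, e ≠ none → mul e e = e → mul s e = e → mul s s = s) ↔
      PseudoFree S := by
  constructor
  · intro hU g e hfix hphi
    have hx : S.actV g (S.r e) = S.r e := by rw [← S.r_act, hfix]
    let f : SGETriple S :=
      ⟨(Pth.cons e (Pth.nil (S.d e)), 1, Pth.cons e (Pth.nil (S.d e))),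
        ⟨rfl, trivial⟩, ⟨rfl, trivial⟩, (S.actV_one _).symm⟩
    let s : SGETriple S := ⟨(Pth.nil (S.r e), g, Pth.nil (S.r e)), trivial, trivial, hx.symm⟩
    have hsf : mul (some s) (some f) = some f :=
      hmul.mul_eq_of_left_prefix (ε := f.1.1) ⟨rfl, trivial⟩ rfl rfl <| by
        simp only [f, s, compP, actP, phiP, hfix, hphi, S.actV_one, mul_one]
    exact hmul.eq_one_of_mul_self <| hU (some f) (some s) (Option.some_ne_none f)
      (hmul.mul_self_of_eq_one rfl rfl) hsf
  · intro hS e s he _ hse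
    obtain ⟨e, rfl⟩ := Option.ne_none_iff_exists'.mp he
    cases s with
    | none => exact hmul.1 none
    | some s =>
      obtain ⟨hαβ, τ, hτ⟩ := hmul.exists_stronglyFixed_of_mul_eq_right hse
      exact hmul.mul_self_of_eq_one (hS.eq_one_of_stronglyFixed hτ) hαβ

/-- `S_{G,E}` is `E*`-unitary (whenever `e` is a nonzero idempotent and
`s·e = e`, then `s` is idempotent) if and only if `(G,E,φ)` is pseudo free. -/
theorem statement7 {G V Ed : Type} [Group G] [Fintype V] [Fintype Ed]
    (S : SelfSimGraph G V Ed) (hNoSources : ∀ x : V, ∃ e : Ed, S.r e = x)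
    (mul : SGE S → SGE S → SGE S) (hmul : MulSpec S mul) :
    (∀ e s : SGE S, e ≠ none → mul e e = e → mul s e = e → mul s s = s) ↔
      PseudoFree S :=
  statement7_general S mul hmul
end
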